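/- Reducibility and termination: (i) if a finite distribution of values D belongs to DRed^p_{μ,ρ}, then |D| ≥ p; (ii) if a closed term M belongs to TRed^p_{μ,ρ}, then |⟦M⟧| ≥ p. -/

import Mathlib

open scoped ENNReal

noncomputable section

/-! ### Syntax of the probabilistic λ-calculus λ⊕ (A-normal form) -/

mutual
inductive Val : Type
  | var : ℕ → Val
  | zero : Val
  | succ : Val → Val
  | lam : ℕ → Tm → Val
  | letrec : ℕ → Val → Val
inductive Tm : Type
  | val : Val → Tm
  | app : Val → Val → Tm
  | letin : ℕ → Tm → Tm → Tm
  | choice : ℝ≥0∞ → Tm → Tm → Tm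
  | case : Val → Val → Val → Tm
end

/-- Numerals `S^n 0`. -/
def natVal : ℕ → Val
  | 0 => .zero
  | n + 1 => .succ (natVal n)

mutual
/-- Free variables of a value. -/
def Val.fv : Val → Finset ℕ
  | .var x => {x}
  | .zero => ∅
  | .succ v => Val.fv v
  | .lam x M => (Tm.fv M).erase x
  | .letrec f v => (Val.fv v).erase f
/-- Free variables of a term. -/
def Tm.fv : Tm → Finset ℕ
  | .val v => Val.fv v
  | .app v w => Val.fv v ∪ Val.fv w
  | .letin x M N => Tm.fv M ∪ (Tm.fv N).erase x
  | .choice _ M N => Tm.fv M ∪ Tm.fv N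
  | .case v w z => Val.fv v ∪ Val.fv w ∪ Val.fv z
end

mutual
/-- Well-formedness of a value: all probabilities in choices lie in (0,1). -/
def Val.WFp : Val → Prop
  | .var _ => True
  | .zero => True
  | .succ v => Val.WFp v
  | .lam _ M => Tm.WFp M
  | .letrec _ v => Val.WFp v
/-- Well-formedness of a term: all probabilities in choices lie in (0,1). -/
def Tm.WFp : Tm → Prop
  | .val v => Val.WFp v
  | .app v w => Val.WFp v ∧ Val.WFp w
  | .letin _ M N => Tm.WFp M ∧ Tm.WFp N
  | .choice p M N => 0 < p ∧ p < 1 ∧ Tm.WFp M ∧ Tm.WFp N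
  | .case v w z => Val.WFp v ∧ Val.WFp w ∧ Val.WFp z
end

mutual
/-- Parallel (capture-naive) substitution of values for variables in a value;
intended to be used with closed substituted values only. -/
def Val.psubst : (ℕ → Option Val) → Val → Val
  | ς, .var y => (ς y).getD (.var y)
  | _, .zero => .zero
  | ς, .succ v => .succ (Val.psubst ς v)
  | ς, .lam y M => .lam y (Tm.psubst (fun z => if z = y then none else ς z) M)
  | ς, .letrec g v => .letrec g (Val.psubst (fun z => if z = g then none else ς z) v)
/-- Parallel substitution in a term. -/
def Tm.psubst : (ℕ → Option Val) → Tm → Tm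
  | ς, .val v => .val (Val.psubst ς v)
  | ς, .app v w => .app (Val.psubst ς v) (Val.psubst ς w)
  | ς, .letin y M N =>
      .letin y (Tm.psubst ς M) (Tm.psubst (fun z => if z = y then none else ς z) N)
  | ς, .choice p M N => .choice p (Tm.psubst ς M) (Tm.psubst ς N)
  | ς, .case v w z => .case (Val.psubst ς v) (Val.psubst ς w) (Val.psubst ς z)
end

/-- Substitution of a single value in a value. -/
def Val.subst1 (x : ℕ) (U : Val) (v : Val) : Val :=
  Val.psubst (fun z => if z = x then some U else none) v

/-- Substitution of a single value in a term. -/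
def Tm.subst1 (x : ℕ) (U : Val) (M : Tm) : Tm :=
  Tm.psubst (fun z => if z = x then some U else none) M

/-! ### Distributions -/

/-- (Sub)distributions over `X`. -/
abbrev Distr (X : Type) := X → ℝ≥0∞

/-- The sum `|D|` of a distribution. -/
def Distr.mass {X : Type} (D : Distr X) : ℝ≥0∞ := ∑' x, D x

open Classical in
/-- The Dirac distribution. -/
def Distr.dirac {X : Type} (a : X) : Distr X := fun b => if b = a then 1 else 0

open Classical in
/-- Pushforward of a distribution. -/
def Distr.map {X Y : Type} (f : X → Y) (D : Distr X) : Distr Y :=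
  fun y => ∑' x, if f x = y then D x else 0

/-- Finite distributions. -/
def Distr.FinSupp {X : Type} (D : Distr X) : Prop := {x | D x ≠ 0}.Finite

open Classical in
/-- `[V i ^ pr i | i]` is a (finite) pseudo-representation of `D`. -/
def PseudoRep {X : Type} (D : Distr X) {n : ℕ} (V : Fin n → X) (pr : Fin n → ℝ≥0∞) : Prop :=
  (∀ i, 0 < D (V i)) ∧ ∀ x, D x = ∑ i, if V i = x then pr i else 0

open Classical in
/-- `[V j ^ pr j | j ∈ J]` is a pseudo-representation of `D` (general countable index). -/
def PseudoRep' {X : Type} (D : Distr X) {J : Type} [Countable J] (V : J → X)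
    (pr : J → ℝ≥0∞) : Prop :=
  (∀ j, 0 < D (V j)) ∧ ∀ x, D x = ∑' j, if V j = x then pr j else 0

/-! ### Call-by-value operational semantics -/

open Classical in
/-- One step of call-by-value reduction, as a function from terms to distributions of terms.
Values (and stuck terms) reduce to themselves. -/
def stepFn : Tm → Distr Tm
  | .val v => Distr.dirac (.val v)
  | .app (.lam x M) w => Distr.dirac (Tm.subst1 x w M)
  | .app (.letrec f v) w =>
      if w = Val.zero ∨ ∃ w', w = Val.succ w' then
        Distr.dirac (.app (Val.subst1 f (.letrec f v) v) w)
      else Distr.dirac (.app (.letrec f v) w)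
  | .app v w => Distr.dirac (.app v w)
  | .letin x (.val v) N => Distr.dirac (Tm.subst1 x v N)
  | .letin x M N => Distr.map (fun K => Tm.letin x K N) (stepFn M)
  | .choice p M N => fun L => (if L = M then p else 0) + (if L = N then 1 - p else 0)
  | .case (.succ v) w _ => Distr.dirac (.app w v)
  | .case .zero _ z => Distr.dirac (.val z)
  | .case v w z => Distr.dirac (.case v w z)

/-- One step of reduction `→ᵥ` on distributions of terms. -/
def stepD (D : Distr Tm) : Distr Tm := fun N => ∑' M, D M * stepFn M N

/-- The distribution obtained from `{M¹}` after `n` steps of `→ᵥ`. -/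
def approxT (M : Tm) (n : ℕ) : Distr Tm := stepD^[n] (Distr.dirac M)

/-- `M ⇒ᵥⁿ approxV M n` : restriction to values of the `n`-step reduct of `{M¹}`. -/
def approxV (M : Tm) (n : ℕ) : Distr Val := fun v => approxT M n (.val v)

/-- The semantics `⟦M⟧` of a term: the lub of its value approximants. -/
def sem (M : Tm) : Distr Val := fun v => ⨆ n, approxV M n v

/-- Almost-sure termination. -/
def Tm.AST (M : Tm) : Prop := Distr.mass (sem M) = 1

/-! ### Affine simple types -/

inductive SimpleTy : Type
  | nat : SimpleTy
  | arrow : SimpleTy → SimpleTy → SimpleTy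
deriving DecidableEq

/-- Simple-type contexts. -/
abbrev SCtx := ℕ → Option SimpleTy

def SCtx.empty : SCtx := fun _ => none

def SCtx.ext (Γ : SCtx) (x : ℕ) (κ : SimpleTy) : SCtx := fun z => if z = x then some κ else Γ z

/-- Affine contraction `Γ ⊎ Δ = Ω` : shared variables must have type `Nat`. -/
def AffUnion (Γ Δ Ω : SCtx) : Prop := ∀ x,
  match Γ x, Δ x with
  | some κ, some κ' => κ = SimpleTy.nat ∧ κ' = SimpleTy.nat ∧ Ω x = some SimpleTy.nat
  | some κ, none => Ω x = some κ
  | none, some κ' => Ω x = some κ'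
  | none, none => Ω x = none

/-- Non-affine contraction `Γ ∪ Δ = Ω` : shared variables must have the same type. -/
def ChUnion (Γ Δ Ω : SCtx) : Prop := ∀ x,
  match Γ x, Δ x with
  | some κ, some κ' => κ = κ' ∧ Ω x = some κ
  | some κ, none => Ω x = some κ
  | none, some κ' => Ω x = some κ'
  | none, none => Ω x = none

mutual
/-- Affine simple typing of values (Figure 1). -/
inductive SimpTyV : SCtx → Val → SimpleTy → Prop
  | var {Γ : SCtx} {x κ} : Γ x = some κ → SimpTyV Γ (.var x) κ
  | zero {Γ : SCtx} : SimpTyV Γ .zero .nat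
  | succ {Γ : SCtx} {v} : SimpTyV Γ v .nat → SimpTyV Γ (.succ v) .nat
  | lam {Γ : SCtx} {x M κ κ'} :
      SimpTyT (SCtx.ext Γ x κ) M κ' → SimpTyV Γ (.lam x M) (.arrow κ κ')
  | letrec {Γ : SCtx} {f v κ} :
      (∀ y κ'', Γ y = some κ'' → κ'' = SimpleTy.nat) →
      SimpTyV (SCtx.ext Γ f (.arrow .nat κ)) v (.arrow .nat κ) →
      SimpTyV Γ (.letrec f v) (.arrow .nat κ)
/-- Affine simple typing of terms (Figure 1). -/
inductive SimpTyT : SCtx → Tm → SimpleTy → Prop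
  | val {Γ : SCtx} {v κ} : SimpTyV Γ v κ → SimpTyT Γ (.val v) κ
  | app {Γ Δ Ω : SCtx} {v w κ κ'} :
      AffUnion Γ Δ Ω → SimpTyV Γ v (.arrow κ κ') → SimpTyV Δ w κ →
      SimpTyT Ω (.app v w) κ'
  | letin {Γ Δ Ω : SCtx} {x M N κ κ'} :
      AffUnion Γ Δ Ω → SimpTyT Γ M κ → SimpTyT (SCtx.ext Δ x κ) N κ' →
      SimpTyT Ω (.letin x M N) κ'
  | choice {Γ Δ Ω : SCtx} {p M N κ} :
      ChUnion Γ Δ Ω → SimpTyT Γ M κ → SimpTyT Δ N κ →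
      SimpTyT Ω (.choice p M N) κ
  | case {Γ Δ Ω : SCtx} {v w z κ} :
      AffUnion Γ Δ Ω → SimpTyV Γ v .nat → SimpTyV Δ w (.arrow .nat κ) →
      SimpTyV Δ z κ → SimpTyT Ω (.case v w z) κ
end

/-! ### Sizes -/

inductive Size : Type
  | var : ℕ → Size
  | inf : Size
  | succ : Size → Size
deriving DecidableEq

/-- Size environments. -/
abbrev SEnv := ℕ → ℕ∞

/-- Interpretation `⟦s⟧_ρ` of a size. -/
def Size.interp (ρ : SEnv) : Size → ℕ∞
  | .var i => ρ i
  | .inf => ⊤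
  | .succ s => Size.interp ρ s + 1

/-- The spine variable of a size, if any. -/
def Size.spine : Size → Option ℕ
  | .var i => some i
  | .inf => none
  | .succ s => Size.spine s

/-- Substitution of a size for a size variable. -/
def Size.subst (i : ℕ) (r : Size) : Size → Size
  | .var j => if j = i then r else .var j
  | .inf => .inf
  | .succ s => .succ (Size.subst i r s)

/-- Iterated successor `succ^k s`. -/
def Size.iter : ℕ → Size → Size
  | 0, s => s
  | k + 1, s => .succ (Size.iter k s)

/-- Occurrence of a size variable in a size. -/
def Size.hasVar (i : ℕ) : Size → Prop
  | .var j => j = i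
  | .inf => False
  | .succ s => Size.hasVar i s

/-- The order `≼` on sizes. -/
inductive SizeLE : Size → Size → Prop
  | refl (s) : SizeLE s s
  | trans {s r t} : SizeLE s r → SizeLE r t → SizeLE s t
  | succ (s) : SizeLE s (.succ s)
  | inf (s) : SizeLE s .inf

/-! ### Sized types and distribution types -/

mutual
/-- Sized types. -/
inductive STy : Type
  | nat : Size → STy
  | arrow : STy → DTy → STy
/-- Distribution types, as finite nonempty formal lists of weighted sized types. -/
inductive DTy : Type
  | single : STy → ℝ≥0∞ → DTy
  | cons : STy → ℝ≥0∞ → DTy → DTy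
end

mutual
/-- Underlying simple type of a sized type. -/
def STy.erase : STy → SimpleTy
  | .nat _ => .nat
  | .arrow σ μ => .arrow (STy.erase σ) (DTy.eraseU μ)
/-- Underlying simple type of a distribution type. -/
def DTy.eraseU : DTy → SimpleTy
  | .single σ _ => STy.erase σ
  | .cons σ _ _ => STy.erase σ
end

/-- The list of entries of a distribution type. -/
def DTy.toList : DTy → List (STy × ℝ≥0∞)
  | .single σ p => [(σ, p)]
  | .cons σ p μ => (σ, p) :: DTy.toList μ

open Classical in
/-- The probability `μ(τ)` assigned by a distribution type to a sized type. -/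
def DTy.prob : DTy → STy → ℝ≥0∞
  | .single σ p, τ => if σ = τ then p else 0
  | .cons σ p μ, τ => (if σ = τ then p else 0) + DTy.prob μ τ

/-- The sum `|μ|` of a distribution type. -/
def DTy.mass : DTy → ℝ≥0∞
  | .single _ p => p
  | .cons _ p μ => p + DTy.mass μ

/-- Well-formedness of distribution types: sum at most one, uniform underlying type. -/
def DTy.WF (μ : DTy) : Prop :=
  DTy.mass μ ≤ 1 ∧ ∀ e ∈ DTy.toList μ, STy.erase e.1 = DTy.eraseU μ

mutual
/-- Size substitution in a sized type. -/
def STy.substSize (i : ℕ) (s : Size) : STy → STy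
  | .nat r => .nat (Size.subst i s r)
  | .arrow σ μ => .arrow (STy.substSize i s σ) (DTy.substSize i s μ)
/-- Size substitution in a distribution type. -/
def DTy.substSize (i : ℕ) (s : Size) : DTy → DTy
  | .single σ p => .single (STy.substSize i s σ) p
  | .cons σ p μ => .cons (STy.substSize i s σ) p (DTy.substSize i s μ)
end

mutual
/-- Occurrence of a size variable in a sized type. -/
def STy.hasVar (i : ℕ) : STy → Prop
  | .nat s => Size.hasVar i s
  | .arrow σ μ => STy.hasVar i σ ∨ DTy.hasVar i μ
/-- Occurrence of a size variable in a distribution type. -/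
def DTy.hasVar (i : ℕ) : DTy → Prop
  | .single σ _ => STy.hasVar i σ
  | .cons σ _ μ => STy.hasVar i σ ∨ DTy.hasVar i μ
end

mutual
/-- Positive occurrences of a size variable in a sized type. -/
inductive PosS : ℕ → STy → Prop
  | nat (i s) : PosS i (.nat s)
  | arrow {i σ μ} : NegS i σ → PosD i μ → PosS i (.arrow σ μ)
/-- Negative occurrences of a size variable in a sized type. -/
inductive NegS : ℕ → STy → Prop
  | nat {i s} : ¬ Size.hasVar i s → NegS i (.nat s)
  | arrow {i σ μ} : PosS i σ → NegD i μ → NegS i (.arrow σ μ)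
/-- Positivity for distribution types. -/
inductive PosD : ℕ → DTy → Prop
  | single {i σ p} : PosS i σ → PosD i (.single σ p)
  | cons {i σ p μ} : PosS i σ → PosD i μ → PosD i (.cons σ p μ)
/-- Negativity for distribution types. -/
inductive NegD : ℕ → DTy → Prop
  | single {i σ p} : NegS i σ → NegD i (.single σ p)
  | cons {i σ p μ} : NegS i σ → NegD i μ → NegD i (.cons σ p μ)
end

open Classical in
mutual
/-- Subtyping of sized types. -/
inductive SubS : STy → STy → Prop
  | refl (σ) : SubS σ σ
  | nat {s r} : SizeLE s r → SubS (.nat s) (.nat r)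
  | arrow {σ τ μ ν} : SubS τ σ → SubD μ ν → SubS (.arrow σ μ) (.arrow τ ν)
/-- Subtyping of distribution types. -/
inductive SubD : DTy → DTy → Prop
  | intro (μ ν : DTy) (f : Fin (DTy.toList μ).length → Fin (DTy.toList ν).length) :
      (∀ a, SubS ((DTy.toList μ).get a).1 ((DTy.toList ν).get (f a)).1) →
      (∀ b, (∑ a, if f a = b then ((DTy.toList μ).get a).2 else 0) ≤
          ((DTy.toList ν).get b).2) →
      SubD μ ν
end

/-- Pointwise order `≼` on distribution types (as distributions of sized types). -/
def DTy.le (μ ν : DTy) : Prop := ∀ τ, DTy.prob μ τ ≤ DTy.prob ν τ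

/-- The Dirac distribution type `{σ¹}`. -/
def DTy.diracAt (σ : STy) : DTy := .single σ 1

/-- A distribution type is Dirac if it denotes a Dirac distribution of types. -/
def DTy.IsDirac (μ : DTy) : Prop := ∃ σ, ∀ τ, DTy.prob μ τ = DTy.prob (DTy.diracAt σ) τ

/-- Scaling of a distribution type. -/
def DTy.scale (c : ℝ≥0∞) : DTy → DTy
  | .single σ p => .single σ (c * p)
  | .cons σ p μ => .cons σ (c * p) (DTy.scale c μ)

/-- Concatenation of distribution types. -/
def DTy.append : DTy → DTy → DTy
  | .single σ p, ν => .cons σ p ν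
  | .cons σ p μ, ν => .cons σ p (DTy.append μ ν)

/-- Probabilistic sum `μ ⊕ₚ ν = p·μ + (1-p)·ν` of distribution types. -/
def DTy.mix (p : ℝ≥0∞) (μ ν : DTy) : DTy := DTy.append (DTy.scale p μ) (DTy.scale (1 - p) ν)

/-! ### Sized walks -/

/-- Probabilities of convergence in finite time of the sized walk with jump distribution `g`
(`g k` = probability to move from `m+1` to `m+k`): `Pr g n m` is the probability to reach `0`
from `m` in at most `n` steps. -/
def Pr (g : ℕ → ℝ≥0∞) : ℕ → ℕ → ℝ≥0∞
  | 0, m => if m = 0 then 1 else 0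
  | n + 1, m =>
      if m = 0 then 1
      else (∑' k, g k * Pr g n (m - 1 + k)) + (1 - ∑' k, g k)

/-- A sized walk is almost surely terminating. -/
def WalkAST (g : ℕ → ℝ≥0∞) : Prop := ∀ m, (⨆ n, Pr g n m) = 1

/-- The jump distribution of the sized walk induced by the data `(k_j, p_j)_j`. -/
def inducedWalk (J : List (ℕ × ℝ≥0∞)) : ℕ → ℝ≥0∞ :=
  fun k => (J.map (fun e => if e.1 = k then e.2 else 0)).sum

/-! ### Monadic affine sized typing (Figure 2) -/

/-- Sized contexts. -/
abbrev SzCtx := ℕ → Option STy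

def SzCtx.empty : SzCtx := fun _ => none

def SzCtx.dom (Γ : SzCtx) : Set ℕ := {x | Γ x ≠ none}

def SzCtx.ext (Γ : SzCtx) (x : ℕ) (σ : STy) : SzCtx := fun z => if z = x then some σ else Γ z

def SzCtx.union (Γ Δ : SzCtx) : SzCtx := fun x => (Γ x).orElse (fun _ => Δ x)

/-- Disjointness of sized contexts. -/
def SzDisj (Γ Δ : SzCtx) : Prop := ∀ x, Γ x = none ∨ Δ x = none

/-- A sized context whose types all refine `Nat`. -/
def SzCtx.natOnly (Γ : SzCtx) : Prop := ∀ x σ, Γ x = some σ → STy.erase σ = SimpleTy.nat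

/-- Distribution contexts: at most one variable with a distribution type. -/
abbrev DCtx := Option (ℕ × DTy)

/-- Disjoint join `Θ, Ψ = Ω` of distribution contexts. -/
def DJoin (Θ Ψ Ω : DCtx) : Prop := (Θ = none ∧ Ω = Ψ) ∨ (Ψ = none ∧ Ω = Θ)

/-- Probabilistic sum `Θ ⊕ₚ Ψ = Ω` of distribution contexts. -/
def DChoiceJoin (p : ℝ≥0∞) : DCtx → DCtx → DCtx → Prop
  | none, none, Ω => Ω = none
  | some (x, μ), none, Ω => Ω = some (x, DTy.scale p μ)
  | none, some (y, ν), Ω => Ω = some (y, DTy.scale (1 - p) ν)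
  | some (x, μ), some (y, ν), Ω =>
      x = y ∧ DTy.eraseU μ = DTy.eraseU ν ∧ Ω = some (x, DTy.mix p μ ν)

/-- Weighted sum `∑ᵢ prᵢ · Ψᵢ = Ω` of distribution contexts. -/
def DWeightedSum {n : ℕ} (pr : Fin n → ℝ≥0∞) (Ψ : Fin n → DCtx) (Ω : DCtx) : Prop :=
  ((∀ a, Ψ a = none) ∧ Ω = none) ∨
  (∃ (y : ℕ) (ν : Fin n → DTy),
    (∀ a, Ψ a = some (y, ν a)) ∧
    (∀ a b, DTy.eraseU (ν a) = DTy.eraseU (ν b)) ∧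
    (∑ a, pr a) ≤ 1 ∧
    ∃ ξ : DTy, Ω = some (y, ξ) ∧ ∀ τ, DTy.prob ξ τ = ∑ a, pr a * DTy.prob (ν a) τ)

mutual
/-- Monadic affine sized typing of values (Figure 2). -/
inductive MTyV : SzCtx → DCtx → Val → STy → Prop
  | var {Γ : SzCtx} {Θ x σ} : Γ x = some σ → MTyV Γ Θ (.var x) σ
  | var' {Γ : SzCtx} {x σ} : MTyV Γ (some (x, DTy.diracAt σ)) (.var x) σ
  | zero {Γ : SzCtx} {Θ s} : MTyV Γ Θ .zero (.nat (.succ s))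
  | succ {Γ : SzCtx} {Θ v s} : MTyV Γ Θ v (.nat s) → MTyV Γ Θ (.succ v) (.nat (.succ s))
  | lam {Γ : SzCtx} {Θ x M σ μ} :
      MTyT (SzCtx.ext Γ x σ) Θ M μ → MTyV Γ Θ (.lam x M) (.arrow σ μ)
  | sub {Γ : SzCtx} {Θ v σ τ} : MTyV Γ Θ v σ → SubS σ τ → MTyV Γ Θ v τ
  | letrec {Γ Δ : SzCtx} {Θ f v} {i : ℕ} {ν : DTy} {J : List (ℕ × ℝ≥0∞)} {μ : DTy} {r : Size} :
      SzCtx.natOnly Γ → SzDisj Γ Δ → Γ f = none →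
      (∀ x σ, Γ x = some σ → ¬ STy.hasVar i σ) →
      PosD i ν →
      DTy.toList μ = J.map (fun e =>
        (STy.arrow (.nat (Size.iter e.1 (.var i)))
          (DTy.substSize i (Size.iter e.1 (.var i)) ν), e.2)) →
      WalkAST (inducedWalk J) →
      MTyV Γ (some (f, μ)) v
        (.arrow (.nat (.succ (.var i))) (DTy.substSize i (.succ (.var i)) ν)) →
      MTyV (SzCtx.union Γ Δ) Θ (.letrec f v) (.arrow (.nat r) (DTy.substSize i r ν))
/-- Monadic affine sized typing of terms (Figure 2). -/
inductive MTyT : SzCtx → DCtx → Tm → DTy → Prop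
  | val {Γ : SzCtx} {Θ v σ} : MTyV Γ Θ v σ → MTyT Γ Θ (.val v) (DTy.diracAt σ)
  | sub {Γ : SzCtx} {Θ M μ ν} : MTyT Γ Θ M μ → SubD μ ν → MTyT Γ Θ M ν
  | app {Γ Δ Ξ : SzCtx} {Θ Ψ Ω : DCtx} {v w σ μ} :
      SzCtx.natOnly Γ → SzDisj Γ Δ → SzDisj Γ Ξ → SzDisj Δ Ξ →
      DJoin Θ Ψ Ω →
      MTyV (SzCtx.union Γ Δ) Θ v (.arrow σ μ) →
      MTyV (SzCtx.union Γ Ξ) Ψ w σ →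
      MTyT (SzCtx.union Γ (SzCtx.union Δ Ξ)) Ω (.app v w) μ
  | choice {Γ : SzCtx} {Θ Ψ Ω : DCtx} {p M N μ ν} :
      0 < p → p < 1 → DTy.eraseU μ = DTy.eraseU ν →
      DChoiceJoin p Θ Ψ Ω →
      MTyT Γ Θ M μ → MTyT Γ Ψ N ν →
      MTyT Γ Ω (.choice p M N) (DTy.mix p μ ν)
  | letin {Γ Δ Ξ : SzCtx} {Θ : DCtx} {x M N} {μ : DTy}
      {νf : Fin (DTy.toList μ).length → DTy}
      {Ψ : Fin (DTy.toList μ).length → DCtx} {Ω₀ Ω : DCtx} {ξ : DTy} :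
      SzCtx.natOnly Γ → SzDisj Γ Δ → SzDisj Γ Ξ → SzDisj Δ Ξ →
      MTyT (SzCtx.union Γ Δ) Θ M μ →
      (∀ a, MTyT (SzCtx.ext (SzCtx.union Γ Ξ) x ((DTy.toList μ).get a).1) (Ψ a) N (νf a)) →
      DWeightedSum (fun a => ((DTy.toList μ).get a).2) Ψ Ω₀ →
      DJoin Θ Ω₀ Ω →
      (∀ τ, DTy.prob ξ τ = ∑ a, ((DTy.toList μ).get a).2 * DTy.prob (νf a) τ) →
      MTyT (SzCtx.union Γ (SzCtx.union Δ Ξ)) Ω (.letin x M N) ξ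
  | case {Γ Δ : SzCtx} {Θ : DCtx} {v w z s μ} :
      SzDisj Γ Δ →
      MTyV Γ none v (.nat (.succ s)) →
      MTyV Δ Θ w (.arrow (.nat s) μ) →
      MTyT Δ Θ (.val z) μ →
      MTyT (SzCtx.union Γ Δ) Θ (.case v w z) μ
end

/-! ### Reducibility sets -/

/-- Builder `DRed` from a family of value reducibility sets. -/
def mkDRed (vred : STy → ℝ≥0∞ → Set Val) (μ : DTy) (p : ℝ≥0∞) : Set (Distr Val) :=
  { D | Distr.FinSupp D ∧
    ∃ (n : ℕ) (V : Fin n → Val) (pr : Fin n → ℝ≥0∞),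
      PseudoRep D V pr ∧
      ∃ pm qm : Fin n → Fin (DTy.toList μ).length → ℝ≥0∞,
        (∀ a b, pm a b ≤ 1) ∧ (∀ a b, qm a b ≤ 1) ∧
        (∀ a b, V a ∈ vred ((DTy.toList μ).get b).1 (qm a b)) ∧
        (∀ a, (∑ b, pm a b) = pr a) ∧
        (∀ b, (∑ a, pm a b) = ((DTy.toList μ).get b).2) ∧
        p ≤ ∑ a, ∑ b, qm a b * pm a b }

/-- Builder `TRed` from a family of value reducibility sets. -/
def mkTRed (κ : SimpleTy) (vred : STy → ℝ≥0∞ → Set Val) (μ : DTy) (p : ℝ≥0∞) : Set Tm :=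
  { M | SimpTyT SCtx.empty M κ ∧
    ∀ r < p, ∃ ν : DTy, DTy.le ν μ ∧ (∀ e ∈ DTy.toList ν, STy.erase e.1 = κ) ∧
      ∃ n : ℕ, approxV M n ∈ mkDRed vred ν r }

/-- The reducibility sets of values, by induction on the underlying simple type. -/
def VRed : SimpleTy → STy → SEnv → ℝ≥0∞ → Set Val
  | .nat, .nat s, ρ, p =>
      { v | ∃ n : ℕ, v = natVal n ∧ (0 < p → (n : ℕ∞) < Size.interp ρ s) }
  | .nat, _, _, _ => ∅
  | .arrow κ κ', .arrow σ' μ, ρ, p =>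
      { v | SimpTyV SCtx.empty v (.arrow κ κ') ∧
        ∀ q : ℝ≥0∞, 0 < q → q ≤ 1 → ∀ w ∈ VRed κ σ' ρ q,
          Tm.app v w ∈ mkTRed κ' (fun τ r => VRed κ' τ ρ r) μ (p * q) }
  | .arrow _ _, _, _, _ => ∅

/-- `VRed^p_{σ,ρ}`. -/
def VRedS (σ : STy) (ρ : SEnv) (p : ℝ≥0∞) : Set Val := VRed (STy.erase σ) σ ρ p

/-- `DRed^p_{μ,ρ}`. -/
def DRedS (μ : DTy) (ρ : SEnv) (p : ℝ≥0∞) : Set (Distr Val) :=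
  mkDRed (fun τ r => VRed (DTy.eraseU μ) τ ρ r) μ p

/-- `TRed^p_{μ,ρ}`. -/
def TRedS (μ : DTy) (ρ : SEnv) (p : ℝ≥0∞) : Set Tm :=
  mkTRed (DTy.eraseU μ) (fun τ r => VRed (DTy.eraseU μ) τ ρ r) μ p

/-! ### Open reducibility sets -/

/-- Product of the degrees over the domain of a (finite-domain) sized context. -/
def ctxProd (Γ : SzCtx) (q : ℕ → ℝ≥0∞) : ℝ≥0∞ := ∏ᶠ x ∈ SzCtx.dom Γ, q x

/-- `TRed^{Γ|Θ}_{μ,ρ}` : reducibility for open terms. -/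
def TRedOpen (Γ : SzCtx) (Θ : DCtx) (μ : DTy) (ρ : SEnv) : Set Tm :=
  match Θ with
  | none =>
    { M | ∀ (q : ℕ → ℝ≥0∞) (v : ℕ → Val),
        (∀ x, q x ≤ 1) →
        (∀ x σ, Γ x = some σ → v x ∈ VRedS σ ρ (q x)) →
        Tm.psubst (fun z => (Γ z).map (fun _ => v z)) M ∈ TRedS μ ρ (ctxProd Γ q) }
  | some (y, τd) =>
    { M | ∀ (q : ℕ → ℝ≥0∞) (v : ℕ → Val)
        (q' : Fin (DTy.toList τd).length → ℝ≥0∞) (W : Val),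
        (∀ x, q x ≤ 1) →
        (∀ x σ, Γ x = some σ → v x ∈ VRedS σ ρ (q x)) →
        (∀ b, q' b ≤ 1) →
        (∀ b, W ∈ VRedS ((DTy.toList τd).get b).1 ρ (q' b)) →
        Tm.psubst (fun z => if z = y then some W else (Γ z).map (fun _ => v z)) M
          ∈ TRedS μ ρ (ctxProd Γ q *
              ((∑ b, ((DTy.toList τd).get b).2 * q' b) +
                (1 - ∑ b, ((DTy.toList τd).get b).2))) }

/-- `VRed^{Γ|Θ}_{σ,ρ}` : reducibility for open values. -/
def VRedOpen (Γ : SzCtx) (Θ : DCtx) (σ : STy) (ρ : SEnv) : Set Val :=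
  match Θ with
  | none =>
    { V | ∀ (q : ℕ → ℝ≥0∞) (v : ℕ → Val),
        (∀ x, q x ≤ 1) →
        (∀ x τ, Γ x = some τ → v x ∈ VRedS τ ρ (q x)) →
        Val.psubst (fun z => (Γ z).map (fun _ => v z)) V ∈ VRedS σ ρ (ctxProd Γ q) }
  | some (y, τd) =>
    { V | ∀ (q : ℕ → ℝ≥0∞) (v : ℕ → Val)
        (q' : Fin (DTy.toList τd).length → ℝ≥0∞) (W : Val),
        (∀ x, q x ≤ 1) →
        (∀ x τ, Γ x = some τ → v x ∈ VRedS τ ρ (q x)) →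
        (∀ b, q' b ≤ 1) →
        (∀ b, W ∈ VRedS ((DTy.toList τd).get b).1 ρ (q' b)) →
        Val.psubst (fun z => if z = y then some W else (Γ z).map (fun _ => v z)) V
          ∈ VRedS σ ρ (ctxProd Γ q *
              ((∑ b, ((DTy.toList τd).get b).2 * q' b) +
                (1 - ∑ b, ((DTy.toList τd).get b).2))) }

/-- `n`-unfolding of `letrec f = W`. -/
def unfold : ℕ → ℕ → Val → Val
  | 0, f, W => .letrec f W
  | n + 1, f, W => Val.subst1 f (unfold n f W) W

end

/-! Every weight `q_{ij}` is at most `1`, so `p ≤ ∑ q_{ij} p_{ij} ≤ ∑ p_{ij} = ∑ p_i = |D|`.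
For a term, every `r < p` is bounded by the mass of some approximant `D_n`, and `D_n ≤ ⟦M⟧`. -/

theorem Distr.mass_mono {X : Type} {D E : Distr X} (h : D ≤ E) : D.mass ≤ E.mass :=
  ENNReal.tsum_le_tsum h

open Classical in
theorem PseudoRep.mass_eq {X : Type} {D : Distr X} {n : ℕ} {V : Fin n → X} {pr : Fin n → ℝ≥0∞}
    (h : PseudoRep D V pr) : D.mass = ∑ i, pr i :=
  calc D.mass = ∑' x, ∑ i, if V i = x then pr i else 0 := tsum_congr h.2
    _ = ∑ i, ∑' x, if V i = x then pr i else 0 :=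
        Summable.tsum_finsetSum fun _ _ => ENNReal.summable
    _ = ∑ i, pr i := by simp only [eq_comm (a := V _), tsum_ite_eq]

theorem le_mass_of_mem_mkDRed {vred : STy → ℝ≥0∞ → Set Val} {μ : DTy} {p : ℝ≥0∞}
    {D : Distr Val} (hD : D ∈ mkDRed vred μ p) : p ≤ D.mass := by
  obtain ⟨-, n, V, pr, hrep, pm, qm, -, hqm, -, hrow, -, hp⟩ := hD
  calc p ≤ ∑ a, ∑ b, qm a b * pm a b := hp
    _ ≤ ∑ a, ∑ b, pm a b := by gcongr with a _ b; exact mul_le_of_le_one_left' (hqm a b)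
    _ = ∑ a, pr a := Finset.sum_congr rfl fun a _ => hrow a
    _ = D.mass := hrep.mass_eq.symm

theorem approxV_le_sem (M : Tm) (n : ℕ) : approxV M n ≤ sem M :=
  fun v => le_iSup (fun k => approxV M k v) n

theorem le_mass_sem_of_mem_mkTRed {κ : SimpleTy} {vred : STy → ℝ≥0∞ → Set Val} {μ : DTy}
    {p : ℝ≥0∞} {M : Tm} (hM : M ∈ mkTRed κ vred μ p) : p ≤ (sem M).mass := by
  refine le_of_forall_lt_imp_le_of_dense fun r hr => ?_
  obtain ⟨_, -, -, n, hDn⟩ := hM.2 r hr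
  exact (le_mass_of_mem_mkDRed hDn).trans (Distr.mass_mono (approxV_le_sem M n))

/-- Reducibility and termination: (i) if a finite distribution of values `D`
belongs to `DRed^p_{μ,ρ}` then `|D| ≥ p`; (ii) if a closed term `M` belongs to
`TRed^p_{μ,ρ}` then `|⟦M⟧| ≥ p`. -/
theorem reducibility_and_termination :
    (∀ (μ : DTy) (ρ : SEnv) (p : ℝ≥0∞) (D : Distr Val),
        DTy.WF μ → p ≤ 1 → D ∈ DRedS μ ρ p → p ≤ Distr.mass D) ∧
    (∀ (μ : DTy) (ρ : SEnv) (p : ℝ≥0∞) (M : Tm),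
        DTy.WF μ → p ≤ 1 → M ∈ TRedS μ ρ p → p ≤ Distr.mass (sem M)) :=
  ⟨fun _ _ _ _ _ _ hD => le_mass_of_mem_mkDRed hD,
    fun _ _ _ _ _ _ hM => le_mass_sem_of_mem_mkTRed hM⟩
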